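/- arXiv:1610.00845 — 2 statements merged into one kernel-verified Lean document; each statement's English description precedes it below -/
import Mathlib

section
/- Let q be an odd prime power, v ≥ 1, and s odd. There exists t with qt ≡ t (mod 2^v) such that a Type-I duadic splitting of Z/2^vZ given by ρ_{s,t}: i ↦ s(i+t) exists, if and only if ν_2(q^j − s) + ν_2(q−1) > v for all integers j ≥ 0. -/
/-!
If `ρ = ρ_{s,t}` maps `P` onto its complement while multiplication by `q` preserves `P`, then
`ρ x ≠ q ^ j * x` for every `x`. If `ν₂(q^j - s) + ν₂(q - 1) ≤ v`, the condition `(q - 1) t ≡ 0`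
forces `2 ^ ν₂(q^j - s) ∣ t`, so `(q^j - s) x = s t` is solvable modulo `2^v`: a contradiction.

Conversely, the cases `j = 0, 1` of the valuation condition give `b < v` with
`q ≡ s ≡ 1 (mod 2^(b+1))` and `2^v ∣ (q - 1) 2^b`. Then `t = 2^b` and
`P = {x | x mod 2^(b+1) < 2^b}` work: modulo `2^(b+1)`, multiplication by `q` is the identity
and `ρ` is the shift by `2^b`, which exchanges the two halves.
-/

/-- The 2-adic valuation of an integer, valued in `ℕ∞` (so that `ν₂(0) = ⊤`). -/
noncomputable def nu2 (m : ℤ) : ℕ∞ := emultiplicity 2 m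

open Function

theorem Finset.image_filter_univ_of_surjective {α β : Type*} [Fintype α] [Fintype β]
    [DecidableEq β] {f : α → β} (hf : Surjective f) {p : α → Prop} {r : β → Prop}
    [DecidablePred p] [DecidablePred r] (h : ∀ x, r (f x) ↔ p x) :
    (univ.filter p).image f = univ.filter r := by
  ext y
  obtain ⟨x, rfl⟩ := hf y
  simp only [mem_image, mem_filter, mem_univ, true_and]
  exact ⟨fun ⟨x', hx', hxx'⟩ => hxx' ▸ (h x').2 hx', fun hx => ⟨x, (h x).1 hx, rfl⟩⟩

theorem ZMod.val_add_half_lt_iff {m : ℕ} [NeZero m] (y : ZMod (2 * m)) :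
    (y + m).val < m ↔ ¬ y.val < m := by
  have hm : (m : ZMod (2 * m)).val = m := ZMod.val_cast_of_lt (by grind [NeZero.pos m])
  have hy := y.val_lt
  rw [ZMod.val_add, hm]
  rcases Nat.lt_or_ge y.val m with h | h
  · rw [Nat.mod_eq_of_lt (by omega)]; omega
  · rw [Nat.mod_eq_sub_mod (by omega), Nat.mod_eq_of_lt (by omega)]; omega

theorem ZMod.isUnit_intCast_of_not_dvd {p : ℕ} (hp : p.Prime) {u : ℤ} (hu : ¬ (p : ℤ) ∣ u)
    (v : ℕ) : IsUnit (u : ZMod (p ^ v)) := by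
  rw [ZMod.coe_int_isUnit_iff_isCoprime, Nat.cast_pow]
  exact ((Nat.prime_iff_prime_int.mp hp).coprime_iff_not_dvd.mpr hu).pow_left

theorem ZMod.isUnit_intCast_of_odd {u : ℤ} (hu : Odd u) (v : ℕ) : IsUnit (u : ZMod (2 ^ v)) :=
  isUnit_intCast_of_not_dvd Nat.prime_two
    (by rwa [Nat.cast_ofNat, ← even_iff_two_dvd, Int.not_even_iff_odd]) v

theorem ZMod.isUnit_natCast_of_odd {n : ℕ} (hn : Odd n) (v : ℕ) : IsUnit (n : ZMod (2 ^ v)) := by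
  exact_mod_cast isUnit_intCast_of_odd ((Int.odd_coe_nat n).mpr hn) v

theorem ZMod.exists_intCast_mul_eq_of_emultiplicity_le {p : ℕ} (hp : p.Prime) {v : ℕ}
    {a b : ℤ} (hab : emultiplicity (p : ℤ) a ≤ emultiplicity (p : ℤ) b) :
    ∃ x : ZMod (p ^ v), (a : ZMod (p ^ v)) * x = b := by
  by_cases ha : a = 0
  · have hb : b = 0 := by
      by_contra hb
      have hfin : FiniteMultiplicity (p : ℤ) b :=
        Int.finiteMultiplicity_iff.mpr ⟨by simp [hp.ne_one], hb⟩
      simp [ha, emultiplicity_eq_top.mpr, hfin] at hab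
    exact ⟨0, by simp [ha, hb]⟩
  have hfin : FiniteMultiplicity (p : ℤ) a :=
    Int.finiteMultiplicity_iff.mpr ⟨by simp [hp.ne_one], ha⟩
  obtain ⟨u, hau, hu⟩ := hfin.exists_eq_pow_mul_and_not_dvd
  obtain ⟨w, rfl⟩ : (p : ℤ) ^ multiplicity (p : ℤ) a ∣ b :=
    pow_dvd_of_le_emultiplicity (hfin.emultiplicity_eq_multiplicity ▸ hab)
  obtain ⟨U, hU⟩ := ZMod.isUnit_intCast_of_not_dvd hp hu v
  refine ⟨(U⁻¹ : (ZMod (p ^ v))ˣ) * w, ?_⟩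
  conv_lhs => rw [hau]
  push_cast
  rw [← hU, mul_assoc, ← mul_assoc (U : ZMod (p ^ v)), Units.mul_inv, one_mul]

theorem pow_mul_ne_of_image_eq_compl {M : Type*} [Monoid M] [Fintype M] [DecidableEq M]
    {P : Finset M} {c : M} (hc : IsUnit c) (hcP : P.image (c * ·) = P) {f : M → M}
    (hf : Injective f) (hfP : P.image f = Pᶜ) (j : ℕ) (x : M) : f x ≠ c ^ j * x := by
  have hpow : ∀ j x, c ^ j * x ∈ P ↔ x ∈ P := by
    intro j
    induction j with
    | zero => simp
    | succ j ih =>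
      intro x
      have hcx := hc.mul_right_injective.mem_finset_image (s := P) (a := c ^ j * x)
      rw [hcP] at hcx
      rw [pow_succ', mul_assoc, hcx, ih]
  have hfx : f x ∉ P ↔ x ∈ P := by
    rw [← Finset.mem_compl, ← hfP, hf.mem_finset_image]
  intro h
  rw [h, hpow] at hfx
  exact (iff_not_self hfx.symm).elim

section LowerHalf

variable {N m : ℕ} [NeZero N] (h : 2 * m ∣ N)

def lowerHalf : Finset (ZMod N) :=
  {x | (ZMod.castHom h (ZMod (2 * m)) x).val < m}

theorem image_mul_lowerHalf {c : ZMod N} (hc : IsUnit c)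
    (hc1 : ZMod.castHom h (ZMod (2 * m)) c = 1) :
    (lowerHalf h).image (c * ·) = lowerHalf h :=
  Finset.image_filter_univ_of_surjective (IsUnit.isUnit_iff_mulLeft_bijective.mp hc).surjective
    fun x => by rw [map_mul, hc1, one_mul]

theorem image_mul_add_lowerHalf [NeZero m] {c t : ZMod N} (hc : IsUnit c)
    (hc1 : ZMod.castHom h (ZMod (2 * m)) c = 1) (ht : ZMod.castHom h (ZMod (2 * m)) t = m) :
    (lowerHalf h).image (fun i => c * (i + t)) = (lowerHalf h)ᶜ := by
  rw [lowerHalf, Finset.compl_filter]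
  apply Finset.image_filter_univ_of_surjective
    ((IsUnit.isUnit_iff_mulLeft_bijective.mp hc).surjective.comp (add_right_surjective t))
  intro x
  rw [comp_apply, map_mul, map_add, hc1, ht, one_mul, ZMod.val_add_half_lt_iff, not_not]

end LowerHalf

theorem pow_sub_dvd_of_lt_emultiplicity_add {α : Type*} [Monoid α] {p x : α} {v a : ℕ}
    (h : (v : ℕ∞) < emultiplicity p x + a) : p ^ (v + 1 - a) ∣ x := by
  apply pow_dvd_of_le_emultiplicity
  generalize emultiplicity p x = n at h ⊢
  cases n with
  | top => exact le_top
  | coe n => norm_cast at h ⊢; omega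

theorem exists_two_pow_dvd_sub_one {q s : ℤ} {v : ℕ} (hv : 1 ≤ v) (hq : Odd q) (hs : Odd s)
    (h0 : v < nu2 (1 - s) + nu2 (q - 1)) (h1 : v < nu2 (q - s) + nu2 (q - 1)) :
    ∃ b : ℕ, b + 1 ≤ v ∧ 2 * 2 ^ b ∣ q - 1 ∧ 2 * 2 ^ b ∣ s - 1 ∧ 2 ^ v ∣ (q - 1) * 2 ^ b := by
  have hq1 : 2 ∣ q - 1 := (hq.sub_odd odd_one).two_dvd
  rcases le_or_gt (v : ℕ∞) (nu2 (q - 1)) with hvq | hqv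
  · exact ⟨0, hv, by simpa using hq1, by simpa using (hs.sub_odd odd_one).two_dvd,
      by simpa using pow_dvd_of_le_emultiplicity hvq⟩
  obtain ⟨a, ha⟩ := ENat.ne_top_iff_exists.mp hqv.ne_top
  rw [← ha] at h0 h1 hqv
  have h2a : 2 ^ a ∣ q - 1 := pow_dvd_of_le_emultiplicity ha.le
  have ha1 : 1 ≤ a := by
    have := le_emultiplicity_of_pow_dvd (k := 1) (by simpa using hq1)
    rw [← nu2, ← ha] at this
    exact_mod_cast this
  have hav : a < v := by exact_mod_cast hqv
  have hb : v - a + 1 = v + 1 - a := by omega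
  have hs1 : 2 ^ (v + 1 - a) ∣ s - 1 :=
    dvd_sub_comm.mp (pow_sub_dvd_of_lt_emultiplicity_add h0)
  have hqs : 2 ^ (v + 1 - a) ∣ q - s := pow_sub_dvd_of_lt_emultiplicity_add h1
  refine ⟨v - a, by omega, ?_, ?_, ?_⟩
  · rw [← pow_succ', hb, ← sub_add_sub_cancel q s 1]
    exact dvd_add hqs hs1
  · rwa [← pow_succ', hb]
  · rw [← Nat.add_sub_cancel' hav.le, pow_add, Nat.add_sub_cancel_left]
    exact mul_dvd_mul_right h2a _

theorem lt_nu2_add_of_image_eq_compl {q : ℕ} (hq : Odd q) {v : ℕ} {s t : ℤ} (hs : Odd s)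
    (ht : (q : ℤ) * t ≡ t [ZMOD (2 ^ v : ℕ)]) {P : Finset (ZMod (2 ^ v))}
    (hP : P.image (fun i => (q : ZMod (2 ^ v)) * i) = P)
    (hρ : P.image (fun i => (s : ZMod (2 ^ v)) * (i + (t : ZMod (2 ^ v)))) = Pᶜ) (j : ℕ) :
    (v : ℕ∞) < nu2 ((q : ℤ) ^ j - s) + nu2 ((q : ℤ) - 1) := by
  by_contra! hle
  have hA : nu2 ((q : ℤ) - 1) ≠ ⊤ :=
    (WithTop.add_ne_top.mp (ne_top_of_le_ne_top (ENat.natCast_ne_top v) hle)).2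
  have hvt : (v : ℕ∞) ≤ nu2 t + nu2 ((q : ℤ) - 1) := by
    have hdvd := Int.modEq_iff_dvd.mp ht.symm
    push_cast at hdvd
    rw [← sub_one_mul] at hdvd
    rw [add_comm, nu2, nu2, ← emultiplicity_mul Int.prime_two]
    exact le_emultiplicity_of_pow_dvd hdvd
  have hst : nu2 ((q : ℤ) ^ j - s) ≤ nu2 (s * t) :=
    ((WithTop.add_le_add_iff_right hA).mp (hle.trans hvt)).trans
      (emultiplicity_le_emultiplicity_of_dvd_right (dvd_mul_left t s))
  obtain ⟨x, hx⟩ := ZMod.exists_intCast_mul_eq_of_emultiplicity_le Nat.prime_two (v := v)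
    (by exact_mod_cast hst)
  refine pow_mul_ne_of_image_eq_compl (ZMod.isUnit_natCast_of_odd hq v) hP
    ((ZMod.isUnit_intCast_of_odd hs v).mul_right_injective.comp (add_left_injective _)) hρ j x ?_
  push_cast at hx
  simp only [comp_apply]
  linear_combination -hx

theorem exists_image_eq_compl_of_lt_nu2_add {q : ℕ} (hq : Odd q) {v : ℕ} (hv : 1 ≤ v) {s : ℤ}
    (hs : Odd s) (h0 : v < nu2 (1 - s) + nu2 ((q : ℤ) - 1))
    (h1 : v < nu2 ((q : ℤ) - s) + nu2 ((q : ℤ) - 1)) :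
    ∃ t : ℤ, (q : ℤ) * t ≡ t [ZMOD (2 ^ v : ℕ)] ∧
      ∃ P : Finset (ZMod (2 ^ v)),
        P.image (fun i => (q : ZMod (2 ^ v)) * i) = P ∧
        P.image (fun i => (s : ZMod (2 ^ v)) * (i + (t : ZMod (2 ^ v)))) = Pᶜ := by
  obtain ⟨b, hbv, hq1, hs1, hqt⟩ :=
    exists_two_pow_dvd_sub_one hv ((Int.odd_coe_nat q).mpr hq) hs h0 h1
  have h : 2 * 2 ^ b ∣ 2 ^ v := pow_succ' 2 b ▸ Nat.pow_dvd_pow 2 hbv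
  refine ⟨2 ^ b, (Int.modEq_iff_dvd.mpr ?_).symm, lowerHalf h,
    image_mul_lowerHalf h (ZMod.isUnit_natCast_of_odd hq v) ?_,
    image_mul_add_lowerHalf h (ZMod.isUnit_intCast_of_odd hs v) ?_ ?_⟩
  · push_cast
    rwa [← sub_one_mul]
  · rw [map_natCast, ← Int.cast_natCast, ← Int.cast_one]
    exact ((ZMod.intCast_eq_intCast_iff_dvd_sub 1 q _).mpr (by push_cast; exact hq1)).symm
  · rw [map_intCast, ← Int.cast_one]
    exact ((ZMod.intCast_eq_intCast_iff_dvd_sub 1 s _).mpr (by push_cast; exact hs1)).symm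
  · rw [map_intCast]
    push_cast
    rfl

theorem stmt13_general (q : ℕ) (hodd : Odd q)
    (v : ℕ) (hv : 1 ≤ v) (s : ℤ) (hs : Odd s) :
    (∃ t : ℤ, (q : ℤ) * t ≡ t [ZMOD (2 ^ v : ℕ)] ∧
      ∃ P : Finset (ZMod (2 ^ v)),
        P.image (fun i => (q : ZMod (2 ^ v)) * i) = P ∧
        P.image (fun i => (s : ZMod (2 ^ v)) * (i + (t : ZMod (2 ^ v)))) = Pᶜ) ↔
    (∀ j : ℕ, nu2 ((q : ℤ) ^ j - s) + nu2 ((q : ℤ) - 1) > (v : ℕ∞)) := by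
  constructor
  · rintro ⟨t, ht, P, hP, hρ⟩ j
    exact lt_nu2_add_of_image_eq_compl hodd hs ht hP hρ j
  · intro H
    exact exists_image_eq_compl_of_lt_nu2_add hodd hv hs (by simpa using H 0) (by simpa using H 1)

/-- for `q` an odd prime power, `v ≥ 1` and `s` odd, there exists `t` with
`q·t ≡ t (mod 2^v)` such that a Type-I duadic splitting of `ℤ/2^vℤ` given by
`ρ_{s,t} : i ↦ s(i+t)` exists, iff `ν₂(q^j − s) + ν₂(q−1) > v` for all `j ≥ 0`. -/
theorem stmt13 (q : ℕ) (hq : ∃ p k : ℕ, p.Prime ∧ 0 < k ∧ q = p ^ k) (hodd : Odd q)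
    (v : ℕ) (hv : 1 ≤ v) (s : ℤ) (hs : Odd s) :
    (∃ t : ℤ, (q : ℤ) * t ≡ t [ZMOD (2 ^ v : ℕ)] ∧
      ∃ P : Finset (ZMod (2 ^ v)),
        P.image (fun i => (q : ZMod (2 ^ v)) * i) = P ∧
        P.image (fun i => (s : ZMod (2 ^ v)) * (i + (t : ZMod (2 ^ v)))) = Pᶜ) ↔
    (∀ j : ℕ, nu2 ((q : ℤ) ^ j - s) + nu2 ((q : ℤ) - 1) > (v : ℕ∞)) :=
  stmt13_general q hodd v hv s hs
end

section
/- Let q be a prime power with q ≡ 1 (mod 4), n = q+1, n' = n/2, and P = {−(n−2)/4, ..., −1, 0, 1, ..., (n−2)/4} ⊆ Z/nZ. Then P is invariant under μ_q: i ↦ qi, P and P + n' partition Z/nZ, and the cyclic code C_P ⊆ F_q[X]/⟨X^n−1⟩ with check polynomial f_P(X) = ∏_{i∈P}(X−θ^i) is an MDS code with parameters [q+1, (q+1)/2, (q+3)/2] over F_q. -/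
/-!
Write `q = 4m + 1`, so `n = 4m + 2`, `n' = 2m + 1` and `P = {-m, …, m}`. Since `q ≡ -1 (mod n)`,
multiplication by `q` is negation, which preserves `P`; the translate `P + n'` is disjoint from `P`
and has the size `n - |P|` of its complement. The code has dimension `deg f_P = |P| = n'`. The
exponents `m + 1, …, 3m + 1` lie in `P + n'`, so `θ ^ (m + 1), …, θ ^ (3m + 1)` are `2m + 1`
consecutive non-roots of `f_P`, hence roots of every codeword, and the BCH bound gives weight
at least `2m + 2`. The generator polynomial `(X ^ n - 1) / f_P` has degree `2m + 1`, so its weight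
is at most `2m + 2` and the bound is attained.
-/

open Polynomial

/-- `f_P(X) = ∏_{i∈P} (X − θ^i)` for a subset `P ⊆ ℤ/nℤ`. -/
noncomputable def fPoly {E : Type*} [Field E] {n : ℕ} (θ : E) (P : Finset (ZMod n)) : E[X] :=
  ∏ i ∈ P, (X - C (θ ^ i.val))

/-- The Hamming weight of an element of `F[X]/⟨X^n − 1⟩`: the number of nonzero
coefficients of its unique representative of degree `< n`. -/
noncomputable def hammingWt {F : Type*} [Field F] {n : ℕ} (hn : n ≠ 0)
    (x : AdjoinRoot (X ^ n - 1 : F[X])) : ℕ :=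
  ((AdjoinRoot.modByMonicHom
    (by simpa using monic_X_pow_sub_C (1 : F) hn : (X ^ n - 1 : F[X]).Monic)) x).support.card

/-- The cyclic code in `F[X]/⟨X^n−1⟩` with check polynomial `h`. -/
noncomputable def cyclicCode (F : Type*) [Field F] (n : ℕ) (h : F[X]) :
    Submodule F (AdjoinRoot (X ^ n - 1 : F[X])) :=
  LinearMap.ker (LinearMap.mulRight F (AdjoinRoot.mk (X ^ n - 1 : F[X]) h))

open Finset

theorem IsPrimitiveRoot.lt_card_support_of_eval_pow_eq_zero {E : Type*} [Field E] {n : ℕ}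
    {θ : E} (hθ : IsPrimitiveRoot θ n) {c : E[X]} (hc : c ≠ 0) (hdeg : c.natDegree < n)
    {b δ : ℕ} (hroots : ∀ j < δ, c.eval (θ ^ (b + j)) = 0) : δ < #c.support := by
  by_contra! hle
  let e := c.support.equivFin.symm
  let s : Fin #c.support → ℕ := fun k => e k
  have hs : ∀ k, s k < n := fun k => (le_natDegree_of_mem_supp _ (e k).2).trans_lt hdeg
  -- the evaluations at `θ ^ (b + i)`, `i < #c.support`, form a square Vandermonde system
  have hvanish : (fun k => c.coeff (s k) * θ ^ (b * s k)) = 0 := by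
    refine Matrix.eq_zero_of_forall_pow_sum_mul_pow_eq_zero (f := fun k => θ ^ s k)
      (fun k l hkl => e.injective (Subtype.ext (hθ.pow_inj (hs k) (hs l) hkl))) fun i => ?_
    calc ∑ k, c.coeff (s k) * θ ^ (b * s k) * (θ ^ s k) ^ (i : ℕ)
        = ∑ k ∈ c.support, c.coeff k * (θ ^ (b + i)) ^ k := by
          rw [← sum_coe_sort c.support, ← e.sum_comp]
          refine sum_congr rfl fun k _ => ?_
          simp only [s, ← pow_mul]
          ring
      _ = c.eval (θ ^ (b + i)) := by rw [eval_eq_sum, Polynomial.sum_def]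
      _ = 0 := hroots i (i.2.trans_le hle)
  obtain ⟨k⟩ : Nonempty (Fin #c.support) :=
    ⟨⟨0, card_pos.mpr (support_nonempty.mpr hc)⟩⟩
  have hθ0 : θ ^ (b * s k) ≠ 0 := pow_ne_zero _ (hθ.ne_zero (by omega))
  exact mem_support_iff.mp (e k).2 (by simpa [hθ0] using congrFun hvanish k)

section CyclicCode

variable {F : Type*} [Field F] {n : ℕ}

theorem monic_X_pow_sub_one (hn : n ≠ 0) : (X ^ n - 1 : F[X]).Monic :=
  monic_X_pow_sub (by rw [degree_one]; exact_mod_cast Nat.pos_of_ne_zero hn)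

theorem degree_X_pow_sub_one (hn : n ≠ 0) : (X ^ n - 1 : F[X]).degree = n := by
  simpa using degree_X_pow_sub_C (Nat.pos_of_ne_zero hn) (1 : F)

theorem natDegree_X_pow_sub_one : (X ^ n - 1 : F[X]).natDegree = n := by
  simpa using natDegree_X_pow_sub_C (n := n) (r := (1 : F))

theorem mk_mem_cyclicCode_iff {h : F[X]} (c : F[X]) :
    AdjoinRoot.mk (X ^ n - 1) c ∈ cyclicCode F n h ↔ X ^ n - 1 ∣ c * h := by
  rw [cyclicCode, LinearMap.mem_ker, LinearMap.mulRight_apply, ← map_mul, AdjoinRoot.mk_eq_zero]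

theorem hammingWt_mk (hn : n ≠ 0) {c : F[X]} (hc : c.degree < n) :
    hammingWt hn (AdjoinRoot.mk (X ^ n - 1) c) = #c.support := by
  rw [hammingWt, AdjoinRoot.modByMonicHom_mk,
    (modByMonic_eq_self_iff (monic_X_pow_sub_one hn)).mpr (by rwa [degree_X_pow_sub_one hn])]

/-- Multiplication by the generator polynomial `g = (X ^ n - 1) / h` identifies the polynomials
of degree `< deg h` with the code. -/
theorem finrank_cyclicCode (hn : n ≠ 0) {h : F[X]} (hh : h.Monic) (hdvd : h ∣ X ^ n - 1) :
    Module.finrank F (cyclicCode F n h) = h.natDegree := by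
  obtain ⟨g, hgh⟩ := hdvd
  have hg : g ≠ 0 := right_ne_zero_of_mul (hgh ▸ (monic_X_pow_sub_one hn).ne_zero)
  let φ : degreeLT F h.natDegree →ₗ[F] cyclicCode F n h :=
    LinearMap.codRestrict _
      ((AdjoinRoot.mkₐ _).toLinearMap ∘ₗ LinearMap.mulLeft F g ∘ₗ Submodule.subtype _)
      fun p => (mk_mem_cyclicCode_iff _).mpr ⟨p, by rw [hgh]; change g * p * h = _; ring⟩
  have hinj : Function.Injective φ := by
    rw [injective_iff_map_eq_zero]
    rintro ⟨p, hp⟩ hφp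
    obtain ⟨k, hk⟩ : X ^ n - 1 ∣ g * p := AdjoinRoot.mk_eq_zero.mp (congrArg Subtype.val hφp)
    have hhp : h ∣ p := ⟨k, mul_left_cancel₀ hg (by rw [hk, hgh]; ring)⟩
    exact Subtype.ext (eq_zero_of_dvd_of_degree_lt hhp
      ((mem_degreeLT.mp hp).trans_eq (degree_eq_natDegree hh.ne_zero).symm))
  have hsurj : Function.Surjective φ := by
    rintro ⟨x, hx⟩
    obtain ⟨c, rfl⟩ := AdjoinRoot.mk_surjective x
    obtain ⟨k, hk⟩ := (mk_mem_cyclicCode_iff c).mp hx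
    have hc : c = g * k := mul_right_cancel₀ hh.ne_zero (by rw [hk, hgh]; ring)
    refine ⟨⟨k %ₘ h, mem_degreeLT.mpr ?_⟩, Subtype.ext ?_⟩
    · exact (degree_modByMonic_lt k hh).trans_eq (degree_eq_natDegree hh.ne_zero)
    · change AdjoinRoot.mk _ (g * (k %ₘ h)) = AdjoinRoot.mk _ c
      rw [AdjoinRoot.mk_eq_mk, hc, modByMonic_eq_sub_mul_div k h, hgh]
      exact ⟨-(k /ₘ h), by ring⟩
  rw [← (LinearEquiv.ofBijective φ ⟨hinj, hsurj⟩).finrank_eq,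
    (degreeLTEquiv F h.natDegree).finrank_eq, Module.finrank_fin_fun]

theorem exists_mem_cyclicCode_hammingWt_le (hn : n ≠ 0) {h : F[X]} (hh : h.Monic)
    (hdvd : h ∣ X ^ n - 1) (hdeg : 0 < h.natDegree) :
    ∃ x ∈ cyclicCode F n h, x ≠ 0 ∧ hammingWt hn x ≤ n - h.natDegree + 1 := by
  obtain ⟨g, hgh⟩ := hdvd
  have hg : g ≠ 0 := right_ne_zero_of_mul (hgh ▸ (monic_X_pow_sub_one hn).ne_zero)
  have hgdeg : g.natDegree = n - h.natDegree := by
    have := natDegree_mul hh.ne_zero hg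
    rw [← hgh, natDegree_X_pow_sub_one] at this
    omega
  have hglt : g.degree < n := by
    rw [degree_eq_natDegree hg]
    exact_mod_cast (by omega : g.natDegree < n)
  refine ⟨AdjoinRoot.mk _ g, (mk_mem_cyclicCode_iff g).mpr ⟨1, by rw [hgh]; ring⟩, ?_, ?_⟩
  · rw [Ne, AdjoinRoot.mk_eq_zero]
    exact fun hdvd => hg (eq_zero_of_dvd_of_degree_lt hdvd (by rwa [degree_X_pow_sub_one hn]))
  · rw [hammingWt_mk hn hglt, ← hgdeg]
    exact card_supp_le_succ_natDegree g

/-- `δ` consecutive powers of `θ` that are not roots of the check polynomial are roots of every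
codeword, so the BCH bound applies. -/
theorem lt_hammingWt_of_mem_cyclicCode {E : Type*} [Field E] [Algebra F E] {θ : E}
    (hθ : IsPrimitiveRoot θ n) (hn : n ≠ 0) {h : F[X]} {b δ : ℕ}
    (hroots : ∀ j < δ, (h.map (algebraMap F E)).eval (θ ^ (b + j)) ≠ 0)
    {x : AdjoinRoot (X ^ n - 1 : F[X])} (hx : x ∈ cyclicCode F n h) (hx0 : x ≠ 0) :
    δ < hammingWt hn x := by
  obtain ⟨p, rfl⟩ := AdjoinRoot.mk_surjective x
  have hXn := monic_X_pow_sub_one (F := F) hn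
  set c := p %ₘ (X ^ n - 1)
  have hpc : AdjoinRoot.mk (X ^ n - 1 : F[X]) c = AdjoinRoot.mk _ p := by
    simpa [AdjoinRoot.modByMonicHom_mk] using AdjoinRoot.mk_leftInverse hXn (AdjoinRoot.mk _ p)
  have hcdeg : c.degree < n := (degree_modByMonic_lt p hXn).trans_eq (degree_X_pow_sub_one hn)
  have hc0 : c ≠ 0 := by rintro hc; exact hx0 (by rw [← hpc, hc, map_zero])
  rw [← hpc, mk_mem_cyclicCode_iff] at hx
  rw [← hpc, hammingWt_mk hn hcdeg]
  obtain ⟨k, hk⟩ := map_dvd (algebraMap F E) hx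
  have hinj := (algebraMap F E).injective
  rw [← support_map_of_injective c hinj]
  refine hθ.lt_card_support_of_eval_pow_eq_zero (b := b) (Polynomial.map_ne_zero hc0)
    (by rwa [natDegree_map_eq_of_injective hinj, natDegree_lt_iff_degree_lt hc0]) fun j hj => ?_
  have hpow : (θ ^ (b + j)) ^ n = 1 := by rw [pow_right_comm, hθ.pow_eq_one, one_pow]
  have hzero := congrArg (eval (θ ^ (b + j))) hk
  simp only [Polynomial.map_mul, Polynomial.map_sub, Polynomial.map_pow, map_X, Polynomial.map_one,
    eval_mul, eval_sub, eval_pow, eval_X, eval_one, hpow, sub_self, zero_mul] at hzero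
  exact (mul_eq_zero.mp hzero).resolve_right (hroots j hj)

end CyclicCode

section CheckPolynomial

variable {E : Type*} [Field E] {n : ℕ} {θ : E}

theorem monic_fPoly (θ : E) (P : Finset (ZMod n)) : (fPoly θ P).Monic :=
  monic_prod_of_monic _ _ fun _ _ => monic_X_sub_C _

theorem natDegree_fPoly (θ : E) (P : Finset (ZMod n)) : (fPoly θ P).natDegree = #P := by
  rw [fPoly, natDegree_prod_of_monic _ _ fun _ _ => monic_X_sub_C _]
  simp only [natDegree_X_sub_C, sum_const, smul_eq_mul, mul_one]

theorem IsPrimitiveRoot.pow_val_injective [NeZero n] (hθ : IsPrimitiveRoot θ n) :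
    Function.Injective fun i : ZMod n => θ ^ i.val :=
  fun i j hij => ZMod.val_injective n (hθ.pow_inj (ZMod.val_lt i) (ZMod.val_lt j) hij)

theorem fPoly_dvd_X_pow_sub_one [NeZero n] (hθ : IsPrimitiveRoot θ n) (P : Finset (ZMod n)) :
    fPoly θ P ∣ X ^ n - 1 := by
  classical
  rw [X_pow_sub_one_eq_prod (NeZero.pos n) hθ, fPoly,
    ← prod_image (f := fun ζ => X - C ζ) fun i _ j _ hij => hθ.pow_val_injective hij]
  refine prod_dvd_prod_of_subset _ _ _ fun ζ hζ => ?_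
  obtain ⟨i, -, rfl⟩ := mem_image.mp hζ
  rw [mem_nthRootsFinset (NeZero.pos n), pow_right_comm, hθ.pow_eq_one, one_pow]

theorem eval_pow_fPoly_ne_zero [NeZero n] (hθ : IsPrimitiveRoot θ n) {P : Finset (ZMod n)}
    {t : ℕ} (ht : (t : ZMod n) ∉ P) : (fPoly θ P).eval (θ ^ t) ≠ 0 := by
  rw [fPoly, eval_prod, prod_ne_zero_iff]
  intro i hi hroot
  rw [eval_sub, eval_X, eval_C, sub_eq_zero,
    (hθ.isOfFinOrder (NeZero.ne n)).pow_eq_pow_iff_modEq, ← hθ.eq_orderOf,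
    ← ZMod.natCast_eq_natCast_iff, ZMod.natCast_zmod_val] at hroot
  exact ht (hroot ▸ hi)

variable {F : Type*} [Field F] [Algebra F E] {f : F[X]} {P : Finset (ZMod n)}

theorem monic_of_map_eq_fPoly (hf : f.map (algebraMap F E) = fPoly θ P) : f.Monic := by
  rw [← monic_map_iff (f := algebraMap F E), hf]
  exact monic_fPoly θ P

theorem natDegree_of_map_eq_fPoly (hf : f.map (algebraMap F E) = fPoly θ P) :
    f.natDegree = #P := by
  rw [← natDegree_map_eq_of_injective (algebraMap F E).injective, hf, natDegree_fPoly]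

theorem dvd_X_pow_sub_one_of_map_eq_fPoly [NeZero n] (hθ : IsPrimitiveRoot θ n)
    (hf : f.map (algebraMap F E) = fPoly θ P) : f ∣ X ^ n - 1 := by
  rw [← map_dvd_map _ (algebraMap F E).injective (monic_of_map_eq_fPoly hf), hf]
  simpa using fPoly_dvd_X_pow_sub_one hθ P

end CheckPolynomial

section CenteredInterval

noncomputable def centeredInterval (n m : ℕ) : Finset (ZMod n) :=
  (Icc (-(m : ℤ)) m).image (↑)

variable {n m : ℕ}

theorem mem_centeredInterval {j : ZMod n} :
    j ∈ centeredInterval n m ↔ ∃ s : ℤ, |s| ≤ m ∧ (s : ZMod n) = j := by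
  simp [centeredInterval, abs_le]

theorem eq_of_intCast_eq_of_abs_sub_lt {s t : ℤ} (h : (s : ZMod n) = t) (hst : |t - s| < n) :
    s = t := by
  have := Int.eq_zero_of_abs_lt_dvd ((ZMod.intCast_eq_intCast_iff_dvd_sub s t n).mp h) hst
  omega

theorem image_neg_centeredInterval :
    (centeredInterval n m).image (fun i => -i) = centeredInterval n m := by
  ext j
  simp only [mem_image, mem_centeredInterval]
  constructor
  · rintro ⟨_, ⟨s, hs, rfl⟩, rfl⟩
    exact ⟨-s, by rwa [abs_neg], by push_cast; ring⟩
  · rintro ⟨s, hs, rfl⟩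
    exact ⟨((-s : ℤ) : ZMod n), ⟨-s, by rwa [abs_neg], rfl⟩, by push_cast; ring⟩

theorem card_centeredInterval (h : 2 * m < n) : #(centeredInterval n m) = 2 * m + 1 := by
  rw [centeredInterval, card_image_of_injOn, Int.card_Icc]
  · omega
  · intro s hs t ht hst
    simp only [coe_Icc, Set.mem_Icc] at hs ht
    exact eq_of_intCast_eq_of_abs_sub_lt hst (by rw [abs_lt]; omega)

theorem image_add_centeredInterval [NeZero n] (hn : n = 4 * m + 2) :
    (centeredInterval n m).image (fun i => i + ((2 * m + 1 : ℕ) : ZMod n)) =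
      (centeredInterval n m)ᶜ := by
  refine eq_of_subset_of_card_le (fun j hj => ?_) ?_
  · obtain ⟨_, hi, rfl⟩ := mem_image.mp hj
    obtain ⟨s, hs, rfl⟩ := mem_centeredInterval.mp hi
    rw [mem_compl, mem_centeredInterval]
    rintro ⟨t, ht, hts⟩
    rw [abs_le] at hs ht
    have := eq_of_intCast_eq_of_abs_sub_lt (s := t) (t := s + (2 * m + 1 : ℕ))
      (by rw [hts]; push_cast; ring) (by rw [abs_lt]; omega)
    omega
  · rw [card_compl, ZMod.card, card_image_of_injective _ (add_left_injective _),
      card_centeredInterval (by omega)]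
    omega

theorem natCast_notMem_centeredInterval [NeZero n] (hn : n = 4 * m + 2) {t : ℕ}
    (ht₁ : m + 1 ≤ t) (ht₂ : t ≤ 3 * m + 1) : (t : ZMod n) ∉ centeredInterval n m := by
  rw [← mem_compl, ← image_add_centeredInterval hn]
  refine mem_image.mpr ⟨((t - (2 * m + 1) : ℤ) : ZMod n), mem_centeredInterval.mpr
    ⟨_, by rw [abs_le]; omega, rfl⟩, by push_cast; ring⟩

end CenteredInterval

/-- for `q ≡ 1 (mod 4)`, `n = q+1`, `n' = n/2` and
`P = {−(n−2)/4, …, −1, 0, 1, …, (n−2)/4} ⊆ ℤ/nℤ`: `P` is `μ_q`-invariant, `P` and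
`P + n'` partition `ℤ/nℤ`, and the cyclic code `C_P` with check polynomial
`f_P(X) = ∏_{i∈P}(X − θ^i)` is an MDS code with parameters
`[q+1, (q+1)/2, (q+3)/2]` over `F_q`. -/
theorem stmt19 (F : Type*) [Field F] (q : ℕ)
    (hq4 : q ≡ 1 [MOD 4]) (n n' : ℕ) (hn : n = q + 1) (hn' : n' = n / 2) [NeZero n]
    (E : Type*) [Field E] [Algebra F E] (θ : E) (hθ : IsPrimitiveRoot θ n)
    (P : Finset (ZMod n))
    (hPdef : P = (Finset.Icc (-(((n : ℤ) - 2) / 4)) (((n : ℤ) - 2) / 4)).image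
      (fun i : ℤ => (i : ZMod n)))
    (fPF : F[X]) (hfPF : fPF.map (algebraMap F E) = fPoly θ P) :
    P.image (fun i => (q : ZMod n) * i) = P ∧
    P.image (fun i => i + (n' : ZMod n)) = Pᶜ ∧
    Module.finrank F ↥(cyclicCode F n fPF) = (q + 1) / 2 ∧
    (∀ x ∈ cyclicCode F n fPF, x ≠ 0 →
      (q + 3) / 2 ≤ hammingWt (Nat.pos_of_ne_zero (fun h => by simp [h] at hn)).ne' x) ∧
    (∃ x ∈ cyclicCode F n fPF, x ≠ 0 ∧
      hammingWt (Nat.pos_of_ne_zero (fun h => by simp [h] at hn)).ne' x = (q + 3) / 2) := by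
  obtain ⟨m, rfl⟩ : ∃ m, q = 4 * m + 1 := ⟨q / 4, by have : q % 4 = 1 := hq4; omega⟩
  have hn4 : n = 4 * m + 2 := by omega
  obtain rfl : n' = 2 * m + 1 := by omega
  obtain rfl : P = centeredInterval n m := by
    rw [hPdef, centeredInterval, show ((n : ℤ) - 2) / 4 = m by omega]
  have hq : ((4 * m + 1 : ℕ) : ZMod n) = -1 := by
    rw [eq_neg_iff_add_eq_zero, ← Nat.cast_add_one, ← hn, ZMod.natCast_self]
  have hmonic := monic_of_map_eq_fPoly hfPF
  have hdvd := dvd_X_pow_sub_one_of_map_eq_fPoly hθ hfPF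
  have hdeg : fPF.natDegree = 2 * m + 1 := by
    rw [natDegree_of_map_eq_fPoly hfPF, card_centeredInterval (by omega)]
  have hwt (x) (hx : x ∈ cyclicCode F n fPF) (hx0 : x ≠ 0) : 2 * m + 1 < hammingWt _ x :=
    lt_hammingWt_of_mem_cyclicCode hθ (NeZero.ne n) (b := m + 1) (fun j hj => by
      rw [hfPF]
      exact eval_pow_fPoly_ne_zero hθ (natCast_notMem_centeredInterval hn4 (by omega) (by omega)))
      hx hx0
  obtain ⟨x, hx, hx0, hxwt⟩ :=
    exists_mem_cyclicCode_hammingWt_le (NeZero.ne n) hmonic hdvd (by omega)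
  rw [show (4 * m + 1 + 3) / 2 = 2 * m + 2 by omega]
  refine ⟨by simp only [hq, neg_one_mul, image_neg_centeredInterval],
    image_add_centeredInterval hn4,
    by rw [finrank_cyclicCode (NeZero.ne n) hmonic hdvd, hdeg]; omega, hwt,
    x, hx, hx0, le_antisymm (hxwt.trans (by omega)) (hwt x hx hx0)⟩
end
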